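/- Fix integers n ≥ 2 and even m ≥ 2, set N = m·n, and let g_A, g_B, X be the permutations of ℤ/Nℤ defined in the context. Then X lies on both Cayley geodesics from the identity: X ∈ Γ(g_A,e) ∩ Γ(g_B,e), i.e., d(g_A,X) + d(X,e) = d(g_A,e) and d(g_B,X) + d(X,e) = d(g_B,e). Moreover, the orbit partition of X equals the meet of the orbit partitions of g_A and g_B in the partition lattice: P(X) = P(g_A) ∧ P(g_B). -/

import Mathlib

noncomputable def cycleCount {α : Type*} (g : Equiv.Perm α) : ℕ :=
  Nat.card (Quotient (Setoid.mk g.SameCycle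
    ⟨fun x => Equiv.Perm.SameCycle.refl g x,
     fun h => h.symm,
     fun h₁ h₂ => h₁.trans h₂⟩))

/-- The Cayley distance `d(g,h) = N - #(g h⁻¹)` on the permutations of a finite set. -/
noncomputable def cayley {α : Type*} (g h : Equiv.Perm α) : ℕ :=
  Nat.card α - cycleCount (g * h⁻¹)

/-- `Γ(g,h)`: the set of permutations on the Cayley geodesic between `g` and `h`. -/
def geodesic {α : Type*} (g h : Equiv.Perm α) : Set (Equiv.Perm α) :=
  {k | cayley g k + cayley k h = cayley g h}

/-- The partition of the ground set into the orbits (cycles) of a permutation `g`,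
as a `Setoid`. -/
def sameCycleSetoid {α : Type*} (g : Equiv.Perm α) : Setoid α :=
  ⟨g.SameCycle,
    ⟨fun x => Equiv.Perm.SameCycle.refl g x,
     fun h => h.symm,
     fun h₁ h₂ => h₁.trans h₂⟩⟩

/-!
Write `m = 2h`. On each block `[qm, qm + m)` the permutation `g_B` is the full rotation and `X`
rotates the two halves separately, so `g_B X⁻¹` only swaps the offsets `0` and `h` of every block:
it is a product of `n` disjoint transpositions, whence `d(g_B, X) = n`, while `d(X, e) = N - 2n`
and `d(g_B, e) = N - n`. Since `X` commutes with the translation by `h`, conjugating by it carries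
all of this over to `g_A`. For the meet, the `X`-cycles are the `2n` half-blocks, `g_B` glues
half-blocks `2k, 2k + 1` and `g_A` glues `2k - 1, 2k` (mod `2n`); for `n ≥ 2` the two gluings
share no pair.
-/

open Equiv Equiv.Perm

section CycleCount

variable {α β : Type*}

theorem cycleCount_conj (c g : Perm α) : cycleCount (c * g * c⁻¹) = cycleCount g :=
  Nat.card_congr (Quotient.congr c.symm fun _ _ => sameCycle_conj)

theorem cycleCount_eq_card_of_surjective {g : Perm α} (f : α → β) (hf : Function.Surjective f)
    (h : ∀ x y, g.SameCycle x y ↔ f x = f y) : cycleCount g = Nat.card β :=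
  Nat.card_congr ((Quotient.congrRight h).trans (Setoid.quotientKerEquivOfSurjective f hf))

theorem sameCycle_iff_of_invariant [Finite α] {g : Perm α} (f : α → β)
    (hinv : ∀ x, f (g x) = f x) (hfib : ∀ x y, f x = f y → g.SameCycle x y) (x y : α) :
    g.SameCycle x y ↔ f x = f y := by
  refine ⟨fun hxy => ?_, hfib x y⟩
  obtain ⟨i, rfl⟩ := hxy.exists_nat_pow_eq
  clear hxy
  induction i with
  | zero => rfl
  | succ i ih => rw [pow_succ', mul_apply, hinv, ih]

/-- `p` marks one point of every 2-cycle, so the points outside `p` form a transversal of the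
cycles. -/
theorem cycleCount_eq_card_of_involutive [Finite α] {G : Perm α} (hG : Function.Involutive G)
    (p : α → Prop) [DecidablePred p] (hp : ∀ x, p x → ¬ p (G x))
    (hfix : ∀ x, ¬ p x → ¬ p (G x) → G x = x) :
    cycleCount G = Nat.card {x // ¬ p x} := by
  let r : α → {x // ¬ p x} := fun x => if hx : p x then ⟨G x, hp x hx⟩ else ⟨x, hx⟩
  have hr : ∀ x, G.SameCycle x (r x) := fun x => by
    by_cases hx : p x
    · simpa [r, hx] using sameCycle_apply_right.2 (SameCycle.refl G x)
    · simpa [r, hx] using SameCycle.refl G x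
  refine cycleCount_eq_card_of_surjective r (fun z => ⟨z, dif_neg z.2⟩)
    (sameCycle_iff_of_invariant r (fun x => ?_) fun x y hxy => ?_)
  · by_cases hx : p x
    · simp [r, hx, hp x hx]
    · by_cases hgx : p (G x)
      · simp [r, hx, hgx, hG x]
      · rw [hfix x hx hgx]
  · exact (hr x).trans (congrArg Subtype.val hxy ▸ (hr y).symm)

end CycleCount

theorem ZMod.natCast_div_mul_add_mod_val {N : ℕ} [NeZero N] (b : ℕ) (x : ZMod N) :
    ((x.val / b * b + x.val % b : ℕ) : ZMod N) = x := by
  rw [Nat.div_add_mod', ZMod.natCast_zmod_val]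

section ZModBlocks

variable {N b : ℕ}

theorem Nat.mul_add_lt_of_lt_div (hbN : b ∣ N) {q r : ℕ} (hq : q < N / b) (hr : r < b) :
    q * b + r < N := by
  have := Nat.mul_le_mul_right b (Nat.succ_le_of_lt hq)
  rw [Nat.div_mul_cancel hbN, Nat.succ_mul] at this
  omega

theorem ZMod.val_natCast_mul_add_div (hbN : b ∣ N) {q r : ℕ} (hq : q < N / b) (hr : r < b) :
    ((q * b + r : ℕ) : ZMod N).val / b = q := by
  rw [ZMod.val_natCast_of_lt (Nat.mul_add_lt_of_lt_div hbN hq hr), add_comm,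
    Nat.add_mul_div_right _ _ (by omega), Nat.div_eq_of_lt hr, zero_add]

theorem ZMod.val_sub_div (hb : 0 < b) (hbN : b ∣ N) [NeZero N] (x : ZMod N) :
    (x - b).val / b = (x.val / b + (N / b - 1)) % (N / b) := by
  obtain ⟨k, rfl⟩ := hbN
  have hk : 0 < k := Nat.pos_of_mul_pos_left (Nat.pos_of_ne_zero (NeZero.ne (b * k)))
  have hx : x - b = ((x.val + (k - 1) * b : ℕ) : ZMod (b * k)) := by
    rw [Nat.cast_add, Nat.sub_one_mul, Nat.cast_sub (Nat.le_mul_of_pos_left b hk), mul_comm k,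
      ZMod.natCast_self, ZMod.natCast_zmod_val]
    ring
  rw [hx, ZMod.val_natCast, Nat.mod_mul_right_div_self, Nat.mul_div_cancel_left _ hb,
    Nat.add_mul_div_right _ _ hb]

open Count in
theorem ZMod.card_val_mod_eq (hbN : b ∣ N) {c : ℕ} (hc : c < b) [NeZero N] :
    Nat.card {x : ZMod N // x.val % b = c} = N / b := by
  have hmod : ∀ k, k % b = c ↔ k ≡ c [MOD b] := fun k => by rw [Nat.ModEq, Nat.mod_eq_of_lt hc]
  let e : {x : ZMod N // x.val % b = c} ≃ {k // k < N ∧ k ≡ c [MOD b]} :=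
    { toFun := fun x => ⟨x.1.val, x.1.val_lt, (hmod _).1 x.2⟩
      invFun := fun k => ⟨k.1, by rw [ZMod.val_natCast_of_lt k.2.1, hmod]; exact k.2.2⟩
      left_inv := fun x => Subtype.ext (ZMod.natCast_zmod_val x.1)
      right_inv := fun k => Subtype.ext (ZMod.val_natCast_of_lt k.2.1) }
  rw [Nat.card_congr e, Nat.card_eq_fintype_card, ← Nat.count_eq_card_fintype,
    Nat.count_modEq_card _ (by omega), Nat.mod_eq_zero_of_dvd hbN, Nat.mod_eq_of_lt hc]
  simp

end ZModBlocks

theorem swap_zero_lt {c s : ℕ} (hs : s < 2 * c) : swap 0 c s < 2 * c := by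
  rw [swap_apply_def]
  split_ifs <;> omega

theorem add_pred_mod_add_one_mod_eq_swap {c e r : ℕ} (he : e < 2) (hr : r < c) :
    (e * c + (r + (c - 1)) % c + 1) % (2 * c) = swap 0 c (e * c + r) := by
  obtain _ | r := r
  · rw [Nat.zero_add, Nat.mod_eq_of_lt (show c - 1 < c by omega)]
    interval_cases e
    · rw [show 0 * c + (c - 1) + 1 = c by omega, show 0 * c + 0 = 0 by ring, swap_apply_left,
        Nat.mod_eq_of_lt (by omega)]
    · rw [show 1 * c + (c - 1) + 1 = 2 * c by omega, show 1 * c + 0 = c by ring,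
        swap_apply_right, Nat.mod_self]
  · rw [show r + 1 + (c - 1) = r + c by omega, Nat.add_mod_right,
      Nat.mod_eq_of_lt (show r < c by omega)]
    interval_cases e <;>
      rw [swap_apply_of_ne_of_ne (by omega) (by omega), Nat.mod_eq_of_lt (by omega)] <;> ring

/-- The pairings `{2k, 2k + 1}` and `{2k - 1, 2k}` of `ℤ/2nℤ` have no pair in common when
`n ≥ 2`. -/
theorem eq_of_div_two_eq_of_pred_div_two_eq {n j j' : ℕ} (hn : 2 ≤ n) (hj : j < 2 * n)
    (hj' : j' < 2 * n) (h1 : j / 2 = j' / 2)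
    (h2 : (j + (2 * n - 1)) % (2 * n) / 2 = (j' + (2 * n - 1)) % (2 * n) / 2) : j = j' := by
  have hpred : ∀ i < 2 * n, (i + (2 * n - 1)) % (2 * n) = if i = 0 then 2 * n - 1 else i - 1 := by
    intro i hi
    split_ifs with hi0
    · rw [hi0, zero_add, Nat.mod_eq_of_lt (by omega)]
    · rw [show i + (2 * n - 1) = i - 1 + 2 * n by omega, Nat.add_mod_right,
        Nat.mod_eq_of_lt (by omega)]
  rw [hpred j hj, hpred j' hj'] at h2
  split_ifs at h2 <;> omega

def IsBlockRotation {N : ℕ} (b : ℕ) (P : Perm (ZMod N)) : Prop :=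
  ∀ q r : ℕ, r < b → P ((q * b + r : ℕ) : ZMod N) = ((q * b + (r + 1) % b : ℕ) : ZMod N)

namespace IsBlockRotation

variable {N b : ℕ} {P : Perm (ZMod N)}

theorem pow_apply (hP : IsBlockRotation b P) {q r : ℕ} (hr : r < b) (j : ℕ) :
    (P ^ j) ((q * b + r : ℕ) : ZMod N) = ((q * b + (r + j) % b : ℕ) : ZMod N) := by
  induction j with
  | zero => rw [pow_zero, one_apply, Nat.add_zero, Nat.mod_eq_of_lt hr]
  | succ j ih =>
    rw [pow_succ', mul_apply, ih, hP q _ (Nat.mod_lt _ (by omega)), Nat.mod_add_mod, add_assoc]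

theorem inv_apply (hP : IsBlockRotation b P) {q r : ℕ} (hr : r < b) :
    P⁻¹ ((q * b + r : ℕ) : ZMod N) = ((q * b + (r + (b - 1)) % b : ℕ) : ZMod N) := by
  rw [inv_eq_iff_eq, hP q _ (Nat.mod_lt _ (by omega)), Nat.mod_add_mod,
    show r + (b - 1) + 1 = r + b by omega, Nat.add_mod_right, Nat.mod_eq_of_lt hr]

theorem commute_addLeft (hP : IsBlockRotation b P) (hb : 0 < b) [NeZero N] :
    Commute (Equiv.addLeft (b : ZMod N)) P := by
  refine Equiv.ext fun x => ?_
  simp only [mul_apply, coe_addLeft]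
  rw [← ZMod.natCast_div_mul_add_mod_val b x]
  have hshift : ∀ s, (b : ZMod N) + ((x.val / b * b + s : ℕ) : ZMod N)
      = (((x.val / b + 1) * b + s : ℕ) : ZMod N) := fun s => by push_cast; ring
  rw [hshift, hP _ _ (Nat.mod_lt _ hb), hP _ _ (Nat.mod_lt _ hb), hshift]

theorem sameCycle_iff (hP : IsBlockRotation b P) (hb : 0 < b) (hbN : b ∣ N) [NeZero N]
    (x y : ZMod N) : P.SameCycle x y ↔ x.val / b = y.val / b := by
  refine sameCycle_iff_of_invariant (fun z : ZMod N => z.val / b) (fun z => ?_)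
    (fun x y hxy => ?_) x y
  · conv_lhs => rw [← ZMod.natCast_div_mul_add_mod_val b z]
    rw [hP _ _ (Nat.mod_lt _ hb), ZMod.val_natCast_mul_add_div hbN
      (Nat.div_lt_div_of_lt_of_dvd hbN z.val_lt) (Nat.mod_lt _ hb)]
  · have hxb := Nat.mod_lt x.val hb
    have hpow := hP.pow_apply (q := x.val / b) hxb (b - x.val % b + y.val % b)
    rw [show x.val % b + (b - x.val % b + y.val % b) = y.val % b + b by omega,
      Nat.add_mod_right, Nat.mod_eq_of_lt (Nat.mod_lt _ hb), ZMod.natCast_div_mul_add_mod_val,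
      show x.val / b = y.val / b from hxy, ZMod.natCast_div_mul_add_mod_val] at hpow
    exact hpow ▸ sameCycle_pow_right.2 (SameCycle.refl P x)

theorem cycleCount_eq (hP : IsBlockRotation b P) (hb : 0 < b) (hbN : b ∣ N) [NeZero N] :
    cycleCount P = N / b := by
  rw [← Nat.card_fin (N / b)]
  exact cycleCount_eq_card_of_surjective
    (fun x : ZMod N => (⟨x.val / b, Nat.div_lt_div_of_lt_of_dvd hbN x.val_lt⟩ : Fin (N / b)))
    (fun q => ⟨((q * b + 0 : ℕ) : ZMod N), Fin.ext (ZMod.val_natCast_mul_add_div hbN q.2 hb)⟩)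
    (fun x y => (hP.sameCycle_iff hb hbN x y).trans Fin.mk.inj_iff.symm)

variable {c : ℕ} {B X : Perm (ZMod N)}

theorem mul_inv_apply (hB : IsBlockRotation b B) (hX : IsBlockRotation c X) (hbc : b = 2 * c)
    {k s : ℕ} (hs : s < b) :
    (B * X⁻¹) ((k * b + s : ℕ) : ZMod N) = ((k * b + swap 0 c s : ℕ) : ZMod N) := by
  subst hbc
  have hc : 0 < c := by omega
  obtain ⟨e, r, rfl, he, hr⟩ : ∃ e r, s = e * c + r ∧ e < 2 ∧ r < c :=
    ⟨s / c, s % c, (Nat.div_add_mod' s c).symm, (Nat.div_lt_iff_lt_mul hc).2 hs, Nat.mod_lt _ hc⟩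
  have hcast : ∀ t, ((k * (2 * c) + (e * c + t) : ℕ) : ZMod N)
      = (((2 * k + e) * c + t : ℕ) : ZMod N) := fun t => by congr 1; ring
  have hlt : e * c + (r + (c - 1)) % c < 2 * c := by
    have := Nat.mod_lt (r + (c - 1)) hc
    interval_cases e <;> omega
  rw [mul_apply, hcast, hX.inv_apply hr, ← hcast, hB k _ hlt,
    add_pred_mod_add_one_mod_eq_swap he hr]

theorem mul_inv_apply_eq [NeZero N] (hB : IsBlockRotation b B) (hX : IsBlockRotation c X)
    (hbc : b = 2 * c) (hc : 0 < c) (x : ZMod N) :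
    (B * X⁻¹) x = ((x.val / b * b + swap 0 c (x.val % b) : ℕ) : ZMod N) := by
  conv_lhs => rw [← ZMod.natCast_div_mul_add_mod_val b x]
  exact hB.mul_inv_apply hX hbc (Nat.mod_lt _ (by omega))

theorem involutive_mul_inv [NeZero N] (hB : IsBlockRotation b B) (hX : IsBlockRotation c X)
    (hbc : b = 2 * c) (hc : 0 < c) : Function.Involutive (B * X⁻¹) := fun x => by
  have hs := Nat.mod_lt x.val (show 0 < b by omega)
  rw [hB.mul_inv_apply_eq hX hbc hc x, hB.mul_inv_apply hX hbc (hbc ▸ swap_zero_lt (hbc ▸ hs)),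
    swap_apply_self, ZMod.natCast_div_mul_add_mod_val]

theorem val_mul_inv_apply_mod [NeZero N] (hB : IsBlockRotation b B) (hX : IsBlockRotation c X)
    (hbc : b = 2 * c) (hc : 0 < c) (hbN : b ∣ N) (x : ZMod N) :
    ((B * X⁻¹) x).val % b = swap 0 c (x.val % b) := by
  have hs : swap 0 c (x.val % b) < b := hbc ▸ swap_zero_lt (hbc ▸ Nat.mod_lt x.val (by omega))
  rw [hB.mul_inv_apply_eq hX hbc hc x, ZMod.val_natCast_of_lt (Nat.mul_add_lt_of_lt_div hbN
    (Nat.div_lt_div_of_lt_of_dvd hbN x.val_lt) hs), Nat.mul_add_mod', Nat.mod_eq_of_lt hs]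

theorem cycleCount_mul_inv [NeZero N] (hB : IsBlockRotation b B) (hX : IsBlockRotation c X)
    (hbc : b = 2 * c) (hc : 0 < c) (hbN : b ∣ N) : cycleCount (B * X⁻¹) = N - N / b := by
  have hmod := hB.val_mul_inv_apply_mod hX hbc hc hbN
  rw [cycleCount_eq_card_of_involutive (hB.involutive_mul_inv hX hbc hc) (fun x => x.val % b = c)
    (fun x hx => ?_) (fun x hx hgx => ?_)]
  · rw [Nat.card_eq_fintype_card, Fintype.card_subtype_compl, ← Nat.card_eq_fintype_card,
      ← Nat.card_eq_fintype_card, ZMod.card_val_mod_eq hbN (by omega), Nat.card_zmod]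
  · rw [hmod, hx, swap_apply_right]
    omega
  · have h0 : x.val % b ≠ 0 := fun h0 => hgx (by rw [hmod, h0, swap_apply_left])
    rw [hB.mul_inv_apply_eq hX hbc hc, swap_apply_of_ne_of_ne h0 hx,
      ZMod.natCast_div_mul_add_mod_val]

theorem sameCycle_iff_and_conj {n : ℕ} [NeZero N] {A : Perm (ZMod N)}
    (hB : IsBlockRotation b B) (hX : IsBlockRotation c X) (hbc : b = 2 * c)
    (hA : A = Equiv.addLeft (c : ZMod N) * B * (Equiv.addLeft (c : ZMod N))⁻¹) (hN : N = b * n)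
    (hc : 0 < c) (hn : 2 ≤ n) (x y : ZMod N) :
    X.SameCycle x y ↔ A.SameCycle x y ∧ B.SameCycle x y := by
  have hcN : c ∣ N := ⟨2 * n, by rw [hN, hbc]; ring⟩
  have hNc : N / c = 2 * n := Nat.div_eq_of_eq_mul_left hc (by rw [hN, hbc]; ring)
  have hdiv : ∀ z : ZMod N, z.val / b = z.val / c / 2 := fun z => by
    rw [Nat.div_div_eq_div_mul, hbc, mul_comm]
  have hsub : ∀ z : ZMod N, (Equiv.addLeft (c : ZMod N))⁻¹ z = z - c := fun z => by
    simp [Perm.inv_def, sub_eq_neg_add]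
  have hlt : ∀ z : ZMod N, z.val / c < 2 * n := fun z =>
    hNc ▸ Nat.div_lt_div_of_lt_of_dvd hcN z.val_lt
  rw [hA, sameCycle_conj, hsub, hsub]
  simp only [hX.sameCycle_iff hc hcN, hB.sameCycle_iff (by omega) ⟨n, hN⟩, hdiv,
    ZMod.val_sub_div hc hcN, hNc]
  refine ⟨fun h => by rw [h]; exact ⟨rfl, rfl⟩, fun ⟨hAxy, hBxy⟩ => ?_⟩
  exact eq_of_div_two_eq_of_pred_div_two_eq hn (hlt x) (hlt y) hBxy hAxy

end IsBlockRotation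

/-- `X` lies on both Cayley geodesics `Γ(g_A,e)` and `Γ(g_B,e)`, and its orbit partition
is the meet `P(g_A) ∧ P(g_B)` in the partition lattice. -/
theorem stmt14 (n m : ℕ) (hn : 2 ≤ n) (hm : 2 ≤ m) (hme : Even m)
    (gB gA X : Equiv.Perm (ZMod (m * n)))
(hgB : ∀ q r : ℕ, r < m →
      gB ((q * m + r : ℕ) : ZMod (m * n)) = ((q * m + (r + 1) % m : ℕ) : ZMod (m * n)))
    (hgA : gA = Equiv.addLeft ((m / 2 : ℕ) : ZMod (m * n)) * gB *
      (Equiv.addLeft ((m / 2 : ℕ) : ZMod (m * n)))⁻¹)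
(hX : ∀ q r : ℕ, r < m / 2 →
      X ((q * (m / 2) + r : ℕ) : ZMod (m * n)) =
        ((q * (m / 2) + (r + 1) % (m / 2) : ℕ) : ZMod (m * n)))
    :
    X ∈ geodesic gA 1 ∧ X ∈ geodesic gB 1 ∧
    sameCycleSetoid X = sameCycleSetoid gA ⊓ sameCycleSetoid gB := by
  set h := m / 2
  have hmh : m = 2 * h := (Nat.two_mul_div_two_of_even hme).symm
  have hh : 0 < h := by omega
  replace hgB : IsBlockRotation m gB := hgB
  replace hX : IsBlockRotation h X := hX
  have : NeZero (m * n) := ⟨Nat.mul_ne_zero (by omega) (by omega)⟩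
  have hmN : m ∣ m * n := dvd_mul_right m n
  have hNm : m * n / m = n := Nat.mul_div_cancel_left n (by omega)
  have cX : cycleCount X = 2 * n := by
    rw [hX.cycleCount_eq hh ((Dvd.intro_left 2 hmh.symm).trans hmN)]
    exact Nat.div_eq_of_eq_mul_left hh (by rw [hmh]; ring)
  have cB : cycleCount gB = n := by rw [hgB.cycleCount_eq (by omega) hmN, hNm]
  have cBX : cycleCount (gB * X⁻¹) = m * n - n := by
    rw [hgB.cycleCount_mul_inv hX hmh hh hmN, hNm]
  have hAX : gA * X⁻¹ = Equiv.addLeft (h : ZMod (m * n)) * (gB * X⁻¹) *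
      (Equiv.addLeft (h : ZMod (m * n)))⁻¹ := by
    rw [hgA, mul_assoc _ _ X⁻¹, ((hX.commute_addLeft hh).inv_inv).eq, ← mul_assoc, mul_assoc _ gB]
  have geodesic_of : ∀ g, cycleCount g = n → cycleCount (g * X⁻¹) = m * n - n →
      X ∈ geodesic g 1 := by
    intro g hg hgX
    have : 2 * n ≤ m * n := Nat.mul_le_mul_right n hm
    simp only [geodesic, cayley, Set.mem_ofPred_eq, inv_one, mul_one, Nat.card_zmod, hg, hgX, cX]
    omega
  refine ⟨geodesic_of gA (by rw [hgA, cycleCount_conj, cB]) (by rw [hAX, cycleCount_conj, cBX]),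
    geodesic_of gB cB cBX, Setoid.ext fun x y => ?_⟩
  rw [Setoid.inf_iff_and]
  exact hgB.sameCycle_iff_and_conj hX hmh hgA rfl hh hn x y
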